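/- arXiv:2006.09144 — 6 statements merged into one kernel-verified Lean document; each statement's English description precedes it below -/
import Mathlib

section
/- Let Q be a symmetric positive definite n×n matrix, A a diagonal positive definite n×n matrix, and P = Q + A. If λ_min(A⁻¹Q) ≥ (1-√ε)/√ε for some ε ∈ (0,1], then for every nonzero vector r ∈ ℝ^n, ( -½ rᵀQ⁻¹r - (½ rᵀP⁻¹QP⁻¹r - rᵀP⁻¹r) ) / ( -½ rᵀQ⁻¹r ) ≤ ε. Equivalently, with f(x) = ½xᵀQx + rᵀx, x̂ = -Q⁻¹r, and x̂_A = -P⁻¹r, we have |f(x̂) - f(x̂_A)| / |f(x̂)| ≤ ε. -/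
open Matrix BigOperators Finset

noncomputable def specNorm {𝕜 : Type*} [RCLike 𝕜] {m n : Type*} [Fintype m] [Fintype n]
    [DecidableEq m] [DecidableEq n] (A : Matrix m n 𝕜) : ℝ :=
  ‖LinearMap.toContinuousLinearMap (Matrix.toEuclideanLin A)‖

noncomputable def minEig {n : Type*} [Fintype n] [DecidableEq n] (A : Matrix n n ℝ) : ℝ :=
  sInf {μ : ℝ | (A - μ • 1).det = 0}

noncomputable def maxEig {n : Type*} [Fintype n] [DecidableEq n] (A : Matrix n n ℝ) : ℝ :=
  sSup {μ : ℝ | (A - μ • 1).det = 0}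

def blk {N : ℕ} {d : Fin N → ℕ}
    (B : Matrix ((i : Fin N) × Fin (d i)) ((i : Fin N) × Fin (d i)) ℝ) (i j : Fin N) :
    Matrix (Fin (d i)) (Fin (d j)) ℝ := fun a b => B ⟨i, a⟩ ⟨j, b⟩

noncomputable def eNorm {k : ℕ} (v : Fin k → ℝ) : ℝ := Real.sqrt (∑ a, v a ^ 2)

noncomputable def blockVecNorm {N : ℕ} {d : Fin N → ℕ}
    (x : ((i : Fin N) × Fin (d i)) → ℝ) : ℝ :=
  ⨆ i, eNorm (fun a => x ⟨i, a⟩)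

noncomputable def blockOpNorm {N : ℕ} {d : Fin N → ℕ}
    (B : Matrix ((i : Fin N) × Fin (d i)) ((i : Fin N) × Fin (d i)) ℝ) : ℝ :=
  sInf {c | 0 ≤ c ∧ ∀ x, blockVecNorm (B.mulVec x) ≤ c * blockVecNorm x}

/-!
Put `t = P⁻¹ r`, `a = tᵀQt`, `b = tᵀAt`, `R = (At)ᵀQ⁻¹(At)`. Expanding `r = (Q + A)t` gives
`rᵀQ⁻¹r = a + 2b + R`, `rᵀP⁻¹QP⁻¹r = a` and `rᵀP⁻¹r = a + b`, so the relative error is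
`R / (a + 2b + R)`. The eigenvalue bound says `Q - cA ⪰ 0` for `c = (1 - √ε)/√ε`, which
yields `c b ≤ a` and `c R ≤ b`. Hence
`ε (a + 2b + R) ≥ ε ((c + 2) c + 1) R = ε (c + 1)² R = R`.
-/

lemma mul_sq_sub_sqrt_div_sqrt_add_one {ε : ℝ} (hε : 0 < ε) :
    ε * ((1 - √ε) / √ε + 1) ^ 2 = 1 := by
  have hs : 0 < √ε := Real.sqrt_pos.mpr hε
  rw [div_add_one hs.ne', sub_add_cancel, div_pow, Real.sq_sqrt hε.le]
  field_simp

lemma le_mul_add_two_mul_add_of_mul_le {a b R c ε : ℝ} (hc : 0 ≤ c)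
    (hcε : ε * (c + 1) ^ 2 = 1) (hba : c * b ≤ a) (hRb : c * R ≤ b) :
    R ≤ ε * (a + 2 * b + R) := by
  have hε : 0 ≤ ε := by nlinarith [sq_nonneg (c + 1)]
  have hc2 : 0 ≤ ε * (c + 2) := by positivity
  linear_combination mul_le_mul_of_nonneg_left hba hε + mul_le_mul_of_nonneg_left hRb hc2 +
    (-R) * hcε

namespace Matrix

variable {ι : Type*} [Fintype ι]

lemma PosSemidef.mul_dotProduct_mulVec_le {Q A : Matrix ι ι ℝ} {c : ℝ}
    (hQA : (Q - c • A).PosSemidef) (x : ι → ℝ) : c * (x ⬝ᵥ A *ᵥ x) ≤ x ⬝ᵥ Q *ᵥ x := by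
  have := hQA.dotProduct_mulVec_nonneg x
  simp only [star_trivial, sub_mulVec, smul_mulVec, dotProduct_sub, dotProduct_smul,
    smul_eq_mul] at this
  linarith

variable [DecidableEq ι]

section CommRing

variable {α : Type*} [CommRing α]

lemma nonsing_inv_mulVec_mulVec {P : Matrix ι ι α} (hP : IsUnit P.det) (x : ι → α) :
    P⁻¹ *ᵥ (P *ᵥ x) = x := by
  rw [mulVec_mulVec, nonsing_inv_mul P hP, one_mulVec]

lemma IsSymm.mulVec_dotProduct_inv_mulVec {P : Matrix ι ι α} (hP : P.IsSymm)
    (hdet : IsUnit P.det) (x y : ι → α) : P *ᵥ x ⬝ᵥ P⁻¹ *ᵥ y = x ⬝ᵥ y := by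
  rw [dotProduct_mulVec, ← vecMul_transpose, hP.eq, vecMul_vecMul, mul_nonsing_inv P hdet,
    vecMul_one]

lemma IsSymm.mulVec_dotProduct_inv_mul_mul_inv_mulVec {P : Matrix ι ι α} (hP : P.IsSymm)
    (hdet : IsUnit P.det) (M : Matrix ι ι α) (x : ι → α) :
    P *ᵥ x ⬝ᵥ (P⁻¹ * M * P⁻¹) *ᵥ (P *ᵥ x) = x ⬝ᵥ M *ᵥ x := by
  rw [← mulVec_mulVec, ← mulVec_mulVec, nonsing_inv_mulVec_mulVec hdet,
    hP.mulVec_dotProduct_inv_mulVec hdet]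

lemma IsSymm.add_mulVec_dotProduct_inv_mulVec_add_mulVec {Q : Matrix ι ι α} (hQ : Q.IsSymm)
    (hdet : IsUnit Q.det) (A : Matrix ι ι α) (x : ι → α) :
    (Q + A) *ᵥ x ⬝ᵥ Q⁻¹ *ᵥ ((Q + A) *ᵥ x) =
      x ⬝ᵥ Q *ᵥ x + 2 * (x ⬝ᵥ A *ᵥ x) + A *ᵥ x ⬝ᵥ Q⁻¹ *ᵥ (A *ᵥ x) := by
  simp only [add_mulVec, mulVec_add, add_dotProduct, dotProduct_add,
    hQ.mulVec_dotProduct_inv_mulVec hdet, nonsing_inv_mulVec_mulVec hdet]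
  rw [dotProduct_comm (Q *ᵥ x) x, dotProduct_comm (A *ᵥ x) x]
  ring

end CommRing

lemma IsHermitian.posSemidef_of_forall_det_sub_smul_eq_zero {M : Matrix ι ι ℝ}
    (hM : M.IsHermitian) (h : ∀ μ : ℝ, (M - μ • 1).det = 0 → 0 ≤ μ) : M.PosSemidef := by
  refine hM.posSemidef_iff_eigenvalues_nonneg.mpr fun i => h _ ?_
  have hspec := hM.eigenvalues_mem_spectrum_real i
  rw [spectrum.mem_iff, isUnit_iff_isUnit_det, isUnit_iff_ne_zero, not_not,
    Algebra.algebraMap_eq_smul_one] at hspec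
  rw [← neg_sub, det_neg, hspec, mul_zero]

open scoped MatrixOrder in
/-- `A⁻¹Q` is similar to the Hermitian matrix `B⁻ᴴQB⁻¹`, where `A = BᴴB`, and `Q - cA` is
congruent to `B⁻ᴴQB⁻¹ - c`. -/
lemma posSemidef_sub_smul_of_forall_det_inv_mul_sub_smul_eq_zero {Q A : Matrix ι ι ℝ}
    (hQ : Q.IsHermitian) (hA : A.PosDef) {c : ℝ}
    (h : ∀ μ : ℝ, (A⁻¹ * Q - μ • 1).det = 0 → c ≤ μ) : (Q - c • A).PosSemidef := by
  obtain ⟨B, hAB⟩ : ∃ B, A = Bᴴ * B :=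
    CStarAlgebra.nonneg_iff_eq_star_mul_self.mp hA.posSemidef.nonneg
  have hB : IsUnit B := by
    have hAdet := (isUnit_iff_isUnit_det _).mp hA.isUnit
    rw [hAB, det_mul] at hAdet
    exact (isUnit_iff_isUnit_det B).mpr (isUnit_of_mul_isUnit_right hAdet)
  have hBdet : IsUnit B.det := (isUnit_iff_isUnit_det B).mp hB
  have hBBi : Bᴴ * B⁻¹ᴴ = 1 := by
    rw [← conjTranspose_mul, nonsing_inv_mul B hBdet, conjTranspose_one]
  set M := B⁻¹ᴴ * Q * B⁻¹
  have hsim (ν : ℝ) : A⁻¹ * Q - ν • 1 = B⁻¹ * (M - ν • 1) * B := by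
    rw [hAB, mul_inv_rev, ← conjTranspose_nonsing_inv]
    simp only [M, mul_sub, sub_mul, Matrix.mul_smul, Matrix.smul_mul, mul_one, mul_assoc,
      nonsing_inv_mul B hBdet]
  have hcongr : Q - c • A = Bᴴ * (M - c • 1) * B := by
    rw [hAB]
    simp only [M, mul_sub, sub_mul, Matrix.mul_smul, Matrix.smul_mul, ← mul_assoc, hBBi,
      one_mul]
    simp only [mul_assoc, nonsing_inv_mul B hBdet, mul_one]
  rw [hcongr, ← star_eq_conjTranspose, IsUnit.posSemidef_star_left_conjugate_iff hB]
  refine IsHermitian.posSemidef_of_forall_det_sub_smul_eq_zero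
    ((isHermitian_conjTranspose_mul_mul _ hQ).sub (by simp [IsHermitian])) fun μ hμ => ?_
  have := h (c + μ) (by rw [hsim, det_conj' hB, add_smul, ← sub_sub, hμ])
  linarith

lemma mul_dotProduct_inv_mulVec_le {Q A : Matrix ι ι ℝ} (hQ : IsUnit Q.det)
    (hA : A.PosSemidef) {c : ℝ} (hc : 0 ≤ c) (hQA : (Q - c • A).PosSemidef) (x : ι → ℝ) :
    c * (A *ᵥ x ⬝ᵥ Q⁻¹ *ᵥ (A *ᵥ x)) ≤ x ⬝ᵥ A *ᵥ x := by
  set y := Q⁻¹ *ᵥ (A *ᵥ x)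
  have hQy : Q *ᵥ y = A *ᵥ x := by
    rw [mulVec_mulVec, mul_nonsing_inv Q hQ, one_mulVec]
  have hAsymm : x ⬝ᵥ A *ᵥ y = A *ᵥ x ⬝ᵥ y := by
    rw [dotProduct_mulVec, ← mulVec_transpose, (isHermitian_iff_isSymm.mp hA.isHermitian).eq,
      dotProduct_comm]
  have hyAy : c * (y ⬝ᵥ A *ᵥ y) ≤ A *ᵥ x ⬝ᵥ y := by
    simpa only [hQy, dotProduct_comm y] using hQA.mul_dotProduct_mulVec_le y
  have hexpand : 0 ≤ c * c * (y ⬝ᵥ A *ᵥ y) - 2 * c * (A *ᵥ x ⬝ᵥ y) + x ⬝ᵥ A *ᵥ x := by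
    have := hA.dotProduct_mulVec_nonneg (c • y - x)
    simp only [star_trivial, mulVec_sub, mulVec_smul, sub_dotProduct, dotProduct_sub,
      smul_dotProduct, dotProduct_smul, smul_eq_mul, hAsymm, dotProduct_comm y (A *ᵥ x)] at this
    linarith
  nlinarith [mul_le_mul_of_nonneg_left hyAy hc]

end Matrix

theorem relative_error_bound_general {n : ℕ} (Q A P : Matrix (Fin n) (Fin n) ℝ)
    (hQ : Q.PosDef) (hA : A.PosDef) (hP : P = Q + A)
    (ε : ℝ) (hε0 : 0 < ε) (hε1 : ε ≤ 1)
    (heig : ∀ μ : ℝ, (A⁻¹ * Q - μ • 1).det = 0 → (1 - Real.sqrt ε) / Real.sqrt ε ≤ μ)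
    (r : Fin n → ℝ) :
    (-(1/2) * (r ⬝ᵥ Q⁻¹.mulVec r)
        - ((1/2) * (r ⬝ᵥ (P⁻¹ * Q * P⁻¹).mulVec r) - r ⬝ᵥ P⁻¹.mulVec r))
      / (-(1/2) * (r ⬝ᵥ Q⁻¹.mulVec r)) ≤ ε := by
  set c := (1 - √ε) / √ε
  have hc : 0 ≤ c := div_nonneg (sub_nonneg.mpr (Real.sqrt_le_one.mpr hε1)) (Real.sqrt_nonneg ε)
  have hQA := posSemidef_sub_smul_of_forall_det_inv_mul_sub_smul_eq_zero hQ.isHermitian hA heig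
  have hPd : P.PosDef := hP ▸ hQ.add hA
  have hQdet : IsUnit Q.det := (isUnit_iff_isUnit_det _).mp hQ.isUnit
  have hPdet : IsUnit P.det := (isUnit_iff_isUnit_det _).mp hPd.isUnit
  have hPsymm : P.IsSymm := isHermitian_iff_isSymm.mp hPd.isHermitian
  have hD : 0 ≤ r ⬝ᵥ Q⁻¹ *ᵥ r := by simpa using hQ.inv.posSemidef.dotProduct_mulVec_nonneg r
  obtain ⟨t, rfl⟩ := mulVec_surjective_iff_isUnit.mpr hPd.isUnit r
  rw [hPsymm.mulVec_dotProduct_inv_mul_mul_inv_mulVec hPdet,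
    hPsymm.mulVec_dotProduct_inv_mulVec hPdet, hP,
    (isHermitian_iff_isSymm.mp hQ.isHermitian).add_mulVec_dotProduct_inv_mulVec_add_mulVec hQdet,
    add_mulVec, dotProduct_add] at *
  set a := t ⬝ᵥ Q *ᵥ t
  set b := t ⬝ᵥ A *ᵥ t
  set R := A *ᵥ t ⬝ᵥ Q⁻¹ *ᵥ (A *ᵥ t)
  have hgap : R ≤ ε * (a + 2 * b + R) :=
    le_mul_add_two_mul_add_of_mul_le hc (mul_sq_sub_sqrt_div_sqrt_add_one hε0)
      (hQA.mul_dotProduct_mulVec_le t) (mul_dotProduct_inv_mulVec_le hQdet hA.posSemidef hc hQA t)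
  calc _ = -(1 / 2) * R / (-(1 / 2) * (a + 2 * b + R)) := by congr 1; ring
    _ = R / (a + 2 * b + R) := mul_div_mul_left R _ (by norm_num)
    _ ≤ ε := div_le_of_le_mul₀ hD hε0.le hgap

theorem relative_error_bound {n : ℕ} (Q A P : Matrix (Fin n) (Fin n) ℝ)
    (hQ : Q.PosDef) (hA : A.PosDef) (hAdiag : A.IsDiag) (hP : P = Q + A)
    (ε : ℝ) (hε0 : 0 < ε) (hε1 : ε ≤ 1)
    (heig : ∀ μ : ℝ, (A⁻¹ * Q - μ • 1).det = 0 → (1 - Real.sqrt ε) / Real.sqrt ε ≤ μ)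
    (r : Fin n → ℝ) (hr : r ≠ 0) :
    (-(1/2) * (r ⬝ᵥ Q⁻¹.mulVec r)
        - ((1/2) * (r ⬝ᵥ (P⁻¹ * Q * P⁻¹).mulVec r) - r ⬝ᵥ P⁻¹.mulVec r))
      / (-(1/2) * (r ⬝ᵥ Q⁻¹.mulVec r)) ≤ ε :=
  relative_error_bound_general Q A P hQ hA hP ε hε0 hε1 heig r
end

section
/- Let Q be symmetric positive definite, A diagonal positive definite, P = Q + A, and ε ∈ (0,1]. If λ_min(A⁻¹Q) ≥ (1-√ε)/√ε, then λ_max(P⁻¹A) ≤ √ε. -/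
open Matrix BigOperators Finset

/-! If `μ` is an eigenvalue of `P⁻¹A` with `μ > 0`, then `A - μ(Q + A) = -μ(Q - νA)` with
`ν = (1 - μ)/μ` is singular, so `ν` is an eigenvalue of `A⁻¹Q`. The hypothesis gives
`1/√ε - 1 ≤ 1/μ - 1`, i.e. `μ ≤ √ε`. -/

namespace Matrix

variable {n K : Type*} [Fintype n] [DecidableEq n] [Field K]

theorem det_inv_mul_sub_smul_one_eq_zero_iff {P : Matrix n n K} (hP : IsUnit P.det)
    (M : Matrix n n K) (μ : K) : (P⁻¹ * M - μ • 1).det = 0 ↔ (M - μ • P).det = 0 := by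
  have hfactor : P⁻¹ * M - μ • 1 = P⁻¹ * (M - μ • P) := by
    rw [Matrix.mul_sub, Matrix.mul_smul, nonsing_inv_mul P hP]
  rw [hfactor, det_mul, mul_eq_zero, or_iff_right (isUnit_nonsing_inv_det P hP).ne_zero]

theorem det_sub_smul_add_eq_zero_iff (Q A : Matrix n n K) {μ : K} (hμ : μ ≠ 0) :
    (A - μ • (Q + A)).det = 0 ↔ (Q - ((1 - μ) / μ) • A).det = 0 := by
  have hpencil : A - μ • (Q + A) = (-μ) • (Q - ((1 - μ) / μ) • A) := by
    rw [smul_sub, smul_smul, smul_add]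
    match_scalars <;> field_simp
  rw [hpencil, det_smul, mul_eq_zero, or_iff_right (pow_ne_zero _ (neg_ne_zero.mpr hμ))]

end Matrix

theorem eig_PinvA_le_sqrt_eps_general {n : ℕ} (Q A P : Matrix (Fin n) (Fin n) ℝ)
    (hQ : Q.PosDef) (hA : A.PosDef) (hP : P = Q + A)
    (ε : ℝ) (hε0 : 0 < ε)
    (heig : ∀ μ : ℝ, (A⁻¹ * Q - μ • 1).det = 0 → (1 - Real.sqrt ε) / Real.sqrt ε ≤ μ) :
    ∀ μ : ℝ, (P⁻¹ * A - μ • 1).det = 0 → μ ≤ Real.sqrt ε := by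
  intro μ hμ
  rcases le_or_gt μ 0 with hμ0 | hμ0
  · exact hμ0.trans (Real.sqrt_nonneg ε)
  have hPu : IsUnit P.det :=
    (isUnit_iff_isUnit_det P).mp (hP ▸ hQ.add_posSemidef hA.posSemidef).isUnit
  have hAu : IsUnit A.det := (isUnit_iff_isUnit_det A).mp hA.isUnit
  have hν := heig ((1 - μ) / μ) <| by
    rwa [det_inv_mul_sub_smul_one_eq_zero_iff hAu, ← det_sub_smul_add_eq_zero_iff _ _ hμ0.ne',
      ← hP, ← det_inv_mul_sub_smul_one_eq_zero_iff hPu]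
  rw [div_le_div_iff₀ (Real.sqrt_pos.mpr hε0) hμ0] at hν
  linarith

theorem eig_PinvA_le_sqrt_eps {n : ℕ} (Q A P : Matrix (Fin n) (Fin n) ℝ)
    (hQ : Q.PosDef) (hA : A.PosDef) (hAdiag : A.IsDiag) (hP : P = Q + A)
    (ε : ℝ) (hε0 : 0 < ε) (hε1 : ε ≤ 1)
    (heig : ∀ μ : ℝ, (A⁻¹ * Q - μ • 1).det = 0 → (1 - Real.sqrt ε) / Real.sqrt ε ≤ μ) :
    ∀ μ : ℝ, (P⁻¹ * A - μ • 1).det = 0 → μ ≤ Real.sqrt ε :=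
  eig_PinvA_le_sqrt_eps_general Q A P hQ hA hP ε hε0 heig
end

section
/- Let Q be symmetric positive definite, A diagonal positive definite, P = Q + A. If λ_max(P⁻¹A) ≤ √ε for ε ∈ [0,1], then as symmetric matrices, Q⁻¹ - 2P⁻¹ + P⁻¹QP⁻¹ ⪯ ε Q⁻¹. -/
open Matrix BigOperators Finset

/-!
Write `Q = K²` with `K` Hermitian and invertible, and set `Y = 1 - K P⁻¹ K`. Then
`Q⁻¹ - 2P⁻¹ + P⁻¹QP⁻¹ = K⁻¹ Y² K⁻¹` and `εQ⁻¹ = K⁻¹ (ε • 1) K⁻¹`, so by congruence it suffices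
that `Y² ≤ ε • 1`. Since `K⁻¹ Y K = P⁻¹(P - Q) = P⁻¹A`, the Hermitian matrix `Y` has the
eigenvalues of `P⁻¹A`; these lie in `(0, √ε]` (positivity because `A - μP` is positive definite
for `μ ≤ 0`), so the spectrum of `Y²` lies in `[0, ε]`.
-/

namespace Matrix

variable {n : Type*} [Fintype n] [DecidableEq n]

lemma mem_spectrum_iff_det_sub_smul_one_eq_zero {K : Type*} [Field K] {M : Matrix n n K}
    {μ : K} : μ ∈ spectrum K M ↔ (M - μ • 1).det = 0 := by
  rw [spectrum.mem_iff, isUnit_iff_isUnit_det, isUnit_iff_ne_zero, not_not,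
    Algebra.algebraMap_eq_smul_one, ← neg_sub, det_neg, mul_eq_zero,
    or_iff_right (pow_ne_zero _ (neg_ne_zero.mpr one_ne_zero))]

lemma pos_of_det_inv_mul_sub_smul_one_eq_zero {A P : Matrix n n ℝ} (hA : A.PosDef)
    (hP : P.PosDef) {μ : ℝ} (h : (P⁻¹ * A - μ • 1).det = 0) : 0 < μ := by
  by_contra! hμ
  have hfactor : P⁻¹ * A - μ • 1 = P⁻¹ * (A + (-μ) • P) := by
    rw [mul_add, Matrix.mul_smul, nonsing_inv_mul P hP.det_pos.ne'.isUnit, neg_smul,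
      sub_eq_add_neg]
  have hpencil : (A + (-μ) • P).PosDef :=
    hA.add_posSemidef (hP.posSemidef.smul (neg_nonneg.mpr hμ))
  rw [hfactor, det_mul] at h
  exact mul_ne_zero hP.inv.det_pos.ne' hpencil.det_pos.ne' h

section CommRing

variable {R : Type*} [CommRing R]

lemma det_inv_mul_mul_sub_smul_one {K : Matrix n n R} (hK : IsUnit K) (M : Matrix n n R)
    (μ : R) : (K⁻¹ * M * K - μ • 1).det = (M - μ • 1).det := by
  rw [← det_conj' hK (M - μ • 1), mul_sub, sub_mul, Matrix.mul_smul, mul_one, Matrix.smul_mul,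
    nonsing_inv_mul K ((isUnit_iff_isUnit_det K).mp hK)]

lemma inv_mul_one_sub_mul_inv_mul_mul {K P : Matrix n n R} (hK : IsUnit K) (hP : IsUnit P) :
    K⁻¹ * (1 - K * P⁻¹ * K) * K = P⁻¹ * (P - K * K) := by
  have hKK : K⁻¹ * K = 1 := nonsing_inv_mul K ((isUnit_iff_isUnit_det K).mp hK)
  rw [mul_sub, sub_mul, mul_one, hKK, mul_sub,
    nonsing_inv_mul P ((isUnit_iff_isUnit_det P).mp hP)]
  simp only [← mul_assoc, hKK, one_mul]

lemma inv_mul_self_sub_two_smul_inv_add_inv_mul_mul_inv {K P : Matrix n n R} (hK : IsUnit K) :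
    (K * K)⁻¹ - (2 : R) • P⁻¹ + P⁻¹ * (K * K) * P⁻¹
      = K⁻¹ * ((1 - K * P⁻¹ * K) * (1 - K * P⁻¹ * K)) * K⁻¹ := by
  have hKK : K⁻¹ * K = 1 := nonsing_inv_mul K ((isUnit_iff_isUnit_det K).mp hK)
  have hKK' : K * K⁻¹ = 1 := mul_nonsing_inv K ((isUnit_iff_isUnit_det K).mp hK)
  have hleft : K⁻¹ * (K * P⁻¹ * K) = P⁻¹ * K := by simp only [← mul_assoc, hKK, one_mul]
  have hright : K * P⁻¹ * K * K⁻¹ = K * P⁻¹ := by rw [mul_assoc, hKK', mul_one]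
  have hmid : K⁻¹ * (K * P⁻¹ * K) * K⁻¹ = P⁻¹ := by rw [hleft, mul_assoc, hKK', mul_one]
  calc (K * K)⁻¹ - (2 : R) • P⁻¹ + P⁻¹ * (K * K) * P⁻¹
      = K⁻¹ * K⁻¹ - (2 : R) • (K⁻¹ * (K * P⁻¹ * K) * K⁻¹)
          + (K⁻¹ * (K * P⁻¹ * K)) * (K * P⁻¹ * K * K⁻¹) := by
        rw [mul_inv_rev, hmid, hleft, hright]
        simp only [mul_assoc]
    _ = _ := by
        rw [two_smul]
        noncomm_ring

end CommRing

section RCLike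

open scoped ComplexOrder MatrixOrder

variable {𝕜 : Type*} [RCLike 𝕜]

lemma PosDef.exists_isHermitian_mul_self_eq {Q : Matrix n n 𝕜} (hQ : Q.PosDef) :
    ∃ K : Matrix n n 𝕜, K.IsHermitian ∧ IsUnit K ∧ K * K = Q :=
  ⟨CFC.sqrt Q, (CFC.sqrt_nonneg Q).posSemidef.isHermitian,
    (CFC.isUnit_sqrt_iff Q hQ.posSemidef.nonneg).mpr hQ.isUnit,
    CFC.sqrt_mul_sqrt_self Q hQ.posSemidef.nonneg⟩

lemma IsHermitian.posSemidef_smul_one_sub_mul_self {Y : Matrix n n 𝕜} (hY : Y.IsHermitian)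
    {r : ℝ} (h : ∀ x ∈ spectrum ℝ Y, x * x ≤ r) : (r • 1 - Y * Y).PosSemidef := by
  rw [← Algebra.algebraMap_eq_smul_one, ← le_iff, ← cfc_id' ℝ Y, ← cfc_mul ..]
  exact cfc_le_algebraMap _ r Y h

end RCLike

end Matrix

theorem loewner_regularization_bound_general {n : ℕ} (Q A P : Matrix (Fin n) (Fin n) ℝ)
    (hQ : Q.PosDef) (hA : A.PosDef) (hP : P = Q + A)
    (ε : ℝ) (hε0 : 0 ≤ ε)
    (heig : ∀ μ : ℝ, (P⁻¹ * A - μ • 1).det = 0 → μ ≤ Real.sqrt ε) :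
    (ε • Q⁻¹ - (Q⁻¹ - (2 : ℝ) • P⁻¹ + P⁻¹ * Q * P⁻¹)).PosSemidef := by
  have hPpos : P.PosDef := hP ▸ hQ.add hA
  obtain ⟨K, hKherm, hK, rfl⟩ := hQ.exists_isHermitian_mul_self_eq
  set Y := 1 - K * P⁻¹ * K
  have hYherm : Y.IsHermitian := by
    simpa only [hKherm.eq] using
      isHermitian_one.sub (isHermitian_conjTranspose_mul_mul K hPpos.inv.isHermitian)
  have hYconj : K⁻¹ * Y * K = P⁻¹ * A := by
    rw [inv_mul_one_sub_mul_inv_mul_mul hK hPpos.isUnit, hP, add_sub_cancel_left]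
  have hspec : ∀ x ∈ spectrum ℝ Y, x * x ≤ ε := by
    intro x hx
    rw [mem_spectrum_iff_det_sub_smul_one_eq_zero, ← det_inv_mul_mul_sub_smul_one hK,
      hYconj] at hx
    calc x * x ≤ √ε * √ε :=
          mul_self_le_mul_self (pos_of_det_inv_mul_sub_smul_one_eq_zero hA hPpos hx).le (heig x hx)
      _ = ε := Real.mul_self_sqrt hε0
  have hfactor : ε • (K * K)⁻¹ - ((K * K)⁻¹ - (2 : ℝ) • P⁻¹ + P⁻¹ * (K * K) * P⁻¹)
      = K⁻¹ * (ε • 1 - Y * Y) * K⁻¹ := by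
    rw [inv_mul_self_sub_two_smul_inv_add_inv_mul_mul_inv hK, Matrix.mul_inv_rev,
      mul_sub K⁻¹ (ε • 1), sub_mul _ _ K⁻¹, Matrix.mul_smul, mul_one, Matrix.smul_mul]
  rw [hfactor]
  simpa only [conjTranspose_nonsing_inv, hKherm.eq] using
    (hYherm.posSemidef_smul_one_sub_mul_self hspec).mul_mul_conjTranspose_same K⁻¹

theorem loewner_regularization_bound {n : ℕ} (Q A P : Matrix (Fin n) (Fin n) ℝ)
    (hQ : Q.PosDef) (hA : A.PosDef) (hAdiag : A.IsDiag) (hP : P = Q + A)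
    (ε : ℝ) (hε0 : 0 ≤ ε) (hε1 : ε ≤ 1)
    (heig : ∀ μ : ℝ, (P⁻¹ * A - μ • 1).det = 0 → μ ≤ Real.sqrt ε) :
    (ε • Q⁻¹ - (Q⁻¹ - (2 : ℝ) • P⁻¹ + P⁻¹ * Q * P⁻¹)).PosSemidef :=
  loewner_regularization_bound_general Q A P hQ hA hP ε hε0 heig
end

section
/- Let B be an n×n real matrix, block partitioned according to p = [n_1,...,n_N], that is strictly block diagonally dominant: each diagonal block B[i][i] is invertible and (‖(B[i][i])⁻¹‖_2)⁻¹ > Σ_{j≠i} ‖B[i][j]‖_2 for all i. Define β_p(B) = min_i ( (‖(B[i][i])⁻¹‖_2)⁻¹ - Σ_{j≠i} ‖B[i][j]‖_2 ) > 0. Then B is invertible and ‖B⁻¹‖_{2,p} ≤ 1/β_p(B), where ‖·‖_{2,p} is the operator norm induced by the block-maximum norm ‖x‖_{2,p} = max_i ‖x^{[i]}‖_2. -/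
open Matrix BigOperators Finset

/-!
Let `β` be the smallest dominance gap `‖B[i][i]⁻¹‖⁻¹ - ∑_{j ≠ i} ‖B[i][j]‖`. For any `x`, pick a
block `i` on which `x` attains its block-maximum norm. The `i`-th block of `B x` is
`B[i][i] x[i] + ∑_{j ≠ i} B[i][j] x[j]`, whose norm is at least
`‖B[i][i]⁻¹‖⁻¹ ‖x‖ - ∑_{j ≠ i} ‖B[i][j]‖ ‖x‖ ≥ β ‖x‖`. The lower bound `β ‖x‖ ≤ ‖B x‖` makes `B`
injective, hence invertible, and applied to `x = B⁻¹ y` it gives `‖B⁻¹‖ ≤ β⁻¹`.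
-/

lemma specNorm_nonneg {𝕜 : Type*} [RCLike 𝕜] {m n : Type*} [Fintype m] [Fintype n]
    [DecidableEq m] [DecidableEq n] (A : Matrix m n 𝕜) : 0 ≤ specNorm A :=
  norm_nonneg _

section EuclideanNorm

variable {k l : ℕ}

lemma eNorm_eq_norm (v : Fin k → ℝ) : eNorm v = ‖WithLp.toLp 2 v‖ := by
  simp [eNorm, EuclideanSpace.norm_eq, Real.norm_eq_abs, sq_abs]

lemma eNorm_nonneg (v : Fin k → ℝ) : 0 ≤ eNorm v := Real.sqrt_nonneg _

lemma eNorm_eq_zero {v : Fin k → ℝ} : eNorm v = 0 ↔ v = 0 := by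
  simp [eNorm_eq_norm]

lemma eNorm_le_eNorm_add_add_eNorm (u w : Fin k → ℝ) : eNorm u ≤ eNorm (u + w) + eNorm w := by
  simpa [eNorm_eq_norm] using norm_le_add_norm_add (WithLp.toLp 2 u) (WithLp.toLp 2 w)

lemma eNorm_sum_le {ι : Type*} (s : Finset ι) (f : ι → Fin k → ℝ) :
    eNorm (∑ j ∈ s, f j) ≤ ∑ j ∈ s, eNorm (f j) := by
  simpa [eNorm_eq_norm] using norm_sum_le s fun j => WithLp.toLp 2 (f j)

lemma eNorm_mulVec_le (A : Matrix (Fin k) (Fin l) ℝ) (v : Fin l → ℝ) :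
    eNorm (A *ᵥ v) ≤ specNorm A * eNorm v := by
  simpa [eNorm_eq_norm, specNorm] using
    (LinearMap.toContinuousLinearMap (toEuclideanLin A)).le_opNorm (WithLp.toLp 2 v)

lemma inv_specNorm_inv_mul_eNorm_le {A : Matrix (Fin k) (Fin k) ℝ} (hA : IsUnit A)
    (v : Fin k → ℝ) : (specNorm A⁻¹)⁻¹ * eNorm v ≤ eNorm (A *ᵥ v) := by
  have hv : eNorm v ≤ specNorm A⁻¹ * eNorm (A *ᵥ v) := by
    simpa [mulVec_mulVec, nonsing_inv_mul _ ((isUnit_iff_isUnit_det A).1 hA)] using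
      eNorm_mulVec_le A⁻¹ (A *ᵥ v)
  rcases (specNorm_nonneg A⁻¹).eq_or_lt with h | h
  · simp [← h, eNorm_nonneg]
  · rwa [inv_mul_le_iff₀ h]

end EuclideanNorm

section BlockNorm

variable {N : ℕ} {d : Fin N → ℕ}

def blkVec (x : ((i : Fin N) × Fin (d i)) → ℝ) (i : Fin N) : Fin (d i) → ℝ :=
  fun a => x ⟨i, a⟩

lemma eNorm_blkVec_le_blockVecNorm (x : ((i : Fin N) × Fin (d i)) → ℝ) (i : Fin N) :
    eNorm (blkVec x i) ≤ blockVecNorm x :=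
  le_ciSup (f := fun j => eNorm (blkVec x j)) (Set.finite_range _).bddAbove i

lemma blockVecNorm_nonneg (x : ((i : Fin N) × Fin (d i)) → ℝ) : 0 ≤ blockVecNorm x :=
  Real.iSup_nonneg fun _ => eNorm_nonneg _

@[simp]
lemma blockVecNorm_zero : blockVecNorm (0 : ((i : Fin N) × Fin (d i)) → ℝ) = 0 := by
  simp [blockVecNorm, eNorm]

lemma blockVecNorm_of_isEmpty [IsEmpty (Fin N)] (x : ((i : Fin N) × Fin (d i)) → ℝ) :
    blockVecNorm x = 0 :=
  Real.iSup_of_isEmpty _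

lemma exists_eNorm_blkVec_eq_blockVecNorm [Nonempty (Fin N)]
    (x : ((i : Fin N) × Fin (d i)) → ℝ) : ∃ i, eNorm (blkVec x i) = blockVecNorm x :=
  exists_eq_ciSup_of_finite

lemma eq_zero_of_blockVecNorm_le_zero {x : ((i : Fin N) × Fin (d i)) → ℝ}
    (hx : blockVecNorm x ≤ 0) : x = 0 := by
  funext ⟨i, a⟩
  have hi : blkVec x i = 0 := eNorm_eq_zero.1 <|
    le_antisymm ((eNorm_blkVec_le_blockVecNorm x i).trans hx) (eNorm_nonneg _)
  exact congrFun hi a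

lemma blkVec_mulVec (B : Matrix ((i : Fin N) × Fin (d i)) ((i : Fin N) × Fin (d i)) ℝ)
    (x : ((i : Fin N) × Fin (d i)) → ℝ) (i : Fin N) :
    blkVec (B *ᵥ x) i = ∑ j, blk B i j *ᵥ blkVec x j := by
  ext a
  simp only [blkVec, Finset.sum_apply, mulVec, dotProduct, blk]
  rw [← Finset.univ_sigma_univ, Finset.sum_sigma]

lemma blockOpNorm_le {A : Matrix ((i : Fin N) × Fin (d i)) ((i : Fin N) × Fin (d i)) ℝ} {c : ℝ}
    (hc : 0 ≤ c) (h : ∀ x, blockVecNorm (A *ᵥ x) ≤ c * blockVecNorm x) : blockOpNorm A ≤ c :=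
  csInf_le ⟨0, fun _ hc' => hc'.1⟩ ⟨hc, h⟩

variable {B : Matrix ((i : Fin N) × Fin (d i)) ((i : Fin N) × Fin (d i)) ℝ} {c : ℝ}

lemma isUnit_of_blockVecNorm_le (h : ∀ x, blockVecNorm x ≤ c * blockVecNorm (B *ᵥ x)) :
    IsUnit B := by
  rw [← mulVec_injective_iff_isUnit]
  intro x y hxy
  rw [← sub_eq_zero]
  exact eq_zero_of_blockVecNorm_le_zero <| by simpa [mulVec_sub, hxy] using h (x - y)

lemma blockOpNorm_inv_le (hB : IsUnit B) (hc : 0 ≤ c)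
    (h : ∀ x, blockVecNorm x ≤ c * blockVecNorm (B *ᵥ x)) : blockOpNorm B⁻¹ ≤ c :=
  blockOpNorm_le hc fun y => by
    simpa [mulVec_mulVec, mul_nonsing_inv _ ((isUnit_iff_isUnit_det B).1 hB)] using h (B⁻¹ *ᵥ y)

end BlockNorm

section BlockDominance

variable {N : ℕ} {d : Fin N → ℕ}

/-- The paper's `β_p(B)` is `⨅ i, blockDomGap B i`. -/
noncomputable def blockDomGap
    (B : Matrix ((i : Fin N) × Fin (d i)) ((i : Fin N) × Fin (d i)) ℝ) (i : Fin N) : ℝ :=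
  (specNorm (blk B i i)⁻¹)⁻¹ - ∑ j ∈ univ.erase i, specNorm (blk B i j)

variable {B : Matrix ((i : Fin N) × Fin (d i)) ((i : Fin N) × Fin (d i)) ℝ}

lemma blockDomGap_mul_blockVecNorm_le {i : Fin N} (hi : IsUnit (blk B i i))
    {x : ((i : Fin N) × Fin (d i)) → ℝ} (hx : eNorm (blkVec x i) = blockVecNorm x) :
    blockDomGap B i * blockVecNorm x ≤ eNorm (blkVec (B *ᵥ x) i) := by
  have hsplit : blkVec (B *ᵥ x) i
      = blk B i i *ᵥ blkVec x i + ∑ j ∈ univ.erase i, blk B i j *ᵥ blkVec x j := by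
    rw [blkVec_mulVec, ← add_sum_erase _ _ (mem_univ i)]
  have hdiag : (specNorm (blk B i i)⁻¹)⁻¹ * blockVecNorm x ≤ eNorm (blk B i i *ᵥ blkVec x i) :=
    hx ▸ inv_specNorm_inv_mul_eNorm_le hi _
  have hoff : eNorm (∑ j ∈ univ.erase i, blk B i j *ᵥ blkVec x j)
      ≤ (∑ j ∈ univ.erase i, specNorm (blk B i j)) * blockVecNorm x := by
    rw [sum_mul]
    refine (eNorm_sum_le _ _).trans (sum_le_sum fun j _ => ?_)
    exact (eNorm_mulVec_le _ _).trans
      (mul_le_mul_of_nonneg_left (eNorm_blkVec_le_blockVecNorm x j) (specNorm_nonneg _))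
  have htri := eNorm_le_eNorm_add_add_eNorm (blk B i i *ᵥ blkVec x i)
    (∑ j ∈ univ.erase i, blk B i j *ᵥ blkVec x j)
  rw [blockDomGap, sub_mul, hsplit]
  linarith

lemma blockVecNorm_le_inv_iInf_blockDomGap_mul (hinv : ∀ i, IsUnit (blk B i i))
    (hgap : ∀ i, 0 < blockDomGap B i) (x : ((i : Fin N) × Fin (d i)) → ℝ) :
    blockVecNorm x ≤ (⨅ i, blockDomGap B i)⁻¹ * blockVecNorm (B *ᵥ x) := by
  rcases isEmpty_or_nonempty (Fin N) with hN | hN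
  · simp [blockVecNorm_of_isEmpty]
  obtain ⟨i, hi⟩ := exists_eNorm_blkVec_eq_blockVecNorm x
  obtain ⟨i₀, hi₀⟩ := exists_eq_ciInf_of_finite (f := blockDomGap B)
  rw [le_inv_mul_iff₀ (hi₀ ▸ hgap i₀)]
  calc (⨅ i, blockDomGap B i) * blockVecNorm x ≤ blockDomGap B i * blockVecNorm x :=
        mul_le_mul_of_nonneg_right (ciInf_le (Set.finite_range _).bddBelow i)
          (blockVecNorm_nonneg x)
    _ ≤ eNorm (blkVec (B *ᵥ x) i) := blockDomGap_mul_blockVecNorm_le (hinv i) hi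
    _ ≤ blockVecNorm (B *ᵥ x) := eNorm_blkVec_le_blockVecNorm _ i

end BlockDominance

theorem inv_blockOpNorm_bound_general {N : ℕ} {d : Fin N → ℕ}
    (B : Matrix ((i : Fin N) × Fin (d i)) ((i : Fin N) × Fin (d i)) ℝ)
    (hinv : ∀ i, IsUnit (blk B i i))
    (hdom : ∀ i, ∑ j ∈ Finset.univ.erase i, specNorm (blk B i j)
        < (specNorm ((blk B i i)⁻¹))⁻¹) :
    IsUnit B ∧ blockOpNorm B⁻¹
      ≤ (⨅ i, ((specNorm ((blk B i i)⁻¹))⁻¹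
          - ∑ j ∈ Finset.univ.erase i, specNorm (blk B i j)))⁻¹ := by
  have hgap : ∀ i, 0 < blockDomGap B i := fun i => sub_pos.2 (hdom i)
  have hlower := blockVecNorm_le_inv_iInf_blockDomGap_mul hinv hgap
  have hB : IsUnit B := isUnit_of_blockVecNorm_le hlower
  exact ⟨hB, blockOpNorm_inv_le hB (inv_nonneg.2 (Real.iInf_nonneg fun i => (hgap i).le)) hlower⟩

theorem inv_blockOpNorm_bound {N : ℕ} (hN : 0 < N) {d : Fin N → ℕ}
    (B : Matrix ((i : Fin N) × Fin (d i)) ((i : Fin N) × Fin (d i)) ℝ)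
    (hinv : ∀ i, IsUnit (blk B i i))
    (hdom : ∀ i, ∑ j ∈ Finset.univ.erase i, specNorm (blk B i j)
        < (specNorm ((blk B i i)⁻¹))⁻¹) :
    IsUnit B ∧ blockOpNorm B⁻¹
      ≤ (⨅ i, ((specNorm ((blk B i i)⁻¹))⁻¹
          - ∑ j ∈ Finset.univ.erase i, specNorm (blk B i j)))⁻¹ :=
  inv_blockOpNorm_bound_general B hinv hdom
end

section
/- Let Q = Qᵀ ≻ 0 be block partitioned with symmetric positive definite diagonal blocks, let α_i ≥ 0, and set γ_i(α) = 2/(λ_max(Q[i][i]) + λ_min(Q[i][i]) + 2α_i). Then the regularized per-block contraction factor q_{α_i} = ‖I - γ_i(α)(Q[i][i] + α_i I)‖_2 + γ_i(α) Σ_{j≠i}‖Q[i][j]‖_2 equals (2Σ_{j≠i}‖Q[i][j]‖_2 + λ_max(Q[i][i]) - λ_min(Q[i][i])) / (λ_max(Q[i][i]) + λ_min(Q[i][i]) + 2α_i), and hence for any α_i > 0, q_{α_i} < q_i where q_i is the value at α_i = 0. -/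
open Matrix BigOperators Finset

/-!
Conjugating by an orthonormal eigenbasis of the symmetric block `A = Q[i][i]` turns
`1 - γ (A + α)` into the diagonal matrix with entries
`1 - γ (λ + α) = (λ_max + λ_min - 2λ) / (λ_max + λ_min + 2α)`, `λ` running over the eigenvalues of `A`.
Its spectral norm is the largest absolute value of these entries, `(λ_max - λ_min) / (λ_max + λ_min + 2α)`,
attained at `λ_min`; adding `γ Σ_{j≠i} ‖Q[i][j]‖` gives the formula. Since `λ_min > 0`, a positive
shift `α` only enlarges the denominator of a positive fraction.
-/

open scoped Matrix.Norms.L2Operator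

theorem specNorm_eq_l2_opNorm {𝕜 m n : Type*} [RCLike 𝕜] [Fintype m] [Fintype n] [DecidableEq m]
    [DecidableEq n] (A : Matrix m n 𝕜) : specNorm A = ‖A‖ :=
  rfl

theorem Matrix.setOf_det_sub_smul_one_eq_zero_eq_spectrum {K n : Type*} [Field K] [Fintype n]
    [DecidableEq n] (A : Matrix n n K) : {μ : K | (A - μ • 1).det = 0} = spectrum K A := by
  ext μ
  rw [Set.mem_ofPred_eq, spectrum.mem_iff, Algebra.algebraMap_eq_smul_one,
    Matrix.isUnit_iff_isUnit_det, isUnit_iff_ne_zero, not_not, ← neg_sub, det_neg,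
    mul_eq_zero_iff_left (pow_ne_zero _ (neg_ne_zero.mpr one_ne_zero))]

namespace Matrix.IsHermitian

section RCLike

variable {𝕜 n : Type*} [RCLike 𝕜] [Fintype n] [DecidableEq n] {A : Matrix n n 𝕜}

theorem l2_opNorm_smul_one_add_smul (hA : A.IsHermitian) (a b : 𝕜) :
    ‖a • (1 : Matrix n n 𝕜) + b • A‖ = ‖fun j => a + b * hA.eigenvalues j‖ := by
  have hconj : a • (1 : Matrix n n 𝕜) + b • A = Unitary.conjStarAlgAut 𝕜 _ hA.eigenvectorUnitary
      (diagonal fun j => a + b * hA.eigenvalues j) := by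
    conv_lhs => rw [hA.spectral_theorem]
    rw [← map_one (Unitary.conjStarAlgAut 𝕜 _ hA.eigenvectorUnitary), ← map_smul, ← map_smul,
      ← map_add]
    congr 1
    ext i j
    by_cases h : i = j <;> simp [h]
  rw [hconj, Unitary.conjStarAlgAut_apply, ← Unitary.coe_star, CStarRing.norm_mul_coe_unitary,
    CStarRing.norm_coe_unitary_mul, l2_opNorm_diagonal]

end RCLike

variable {n : Type*} [Fintype n] [DecidableEq n] {A : Matrix n n ℝ}

theorem setOf_det_sub_smul_one_eq_zero (hA : A.IsHermitian) :
    {μ : ℝ | (A - μ • 1).det = 0} = Set.range hA.eigenvalues := by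
  rw [setOf_det_sub_smul_one_eq_zero_eq_spectrum, hA.spectrum_real_eq_range_eigenvalues]

theorem minEig_le_eigenvalues (hA : A.IsHermitian) (j : n) : minEig A ≤ hA.eigenvalues j :=
  csInf_le (hA.setOf_det_sub_smul_one_eq_zero ▸ (Set.finite_range _).bddBelow)
    (hA.setOf_det_sub_smul_one_eq_zero ▸ Set.mem_range_self j)

theorem eigenvalues_le_maxEig (hA : A.IsHermitian) (j : n) : hA.eigenvalues j ≤ maxEig A :=
  le_csSup (hA.setOf_det_sub_smul_one_eq_zero ▸ (Set.finite_range _).bddAbove)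
    (hA.setOf_det_sub_smul_one_eq_zero ▸ Set.mem_range_self j)

theorem exists_eigenvalues_eq_minEig [Nonempty n] (hA : A.IsHermitian) :
    ∃ j, hA.eigenvalues j = minEig A := by
  have hmem : minEig A ∈ {μ : ℝ | (A - μ • 1).det = 0} :=
    (hA.setOf_det_sub_smul_one_eq_zero ▸ Set.range_nonempty _).csInf_mem
      (hA.setOf_det_sub_smul_one_eq_zero ▸ Set.finite_range _)
  rwa [hA.setOf_det_sub_smul_one_eq_zero] at hmem

theorem l2_opNorm_one_sub_smul_add_smul_one [Nonempty n] (hA : A.IsHermitian) (α : ℝ)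
    (hD : 0 < maxEig A + minEig A + 2 * α) :
    ‖1 - (2 / (maxEig A + minEig A + 2 * α)) • (A + α • 1)‖
      = (maxEig A - minEig A) / (maxEig A + minEig A + 2 * α) := by
  set D := maxEig A + minEig A + 2 * α
  set γ := 2 / D
  have hstep : ∀ μ : ℝ, 1 - γ * α + -γ * μ = (maxEig A + minEig A - 2 * μ) / D := by
    intro μ
    simp only [γ]
    field_simp
    ring
  rw [show (1 : Matrix n n ℝ) - γ • (A + α • 1) = (1 - γ * α) • 1 + (-γ) • A by module,
    hA.l2_opNorm_smul_one_add_smul]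
  simp only [RCLike.ofReal_real_eq_id, id, hstep]
  obtain ⟨j, hj⟩ := hA.exists_eigenvalues_eq_minEig
  have hle : minEig A ≤ maxEig A := hj ▸ hA.eigenvalues_le_maxEig j
  refine le_antisymm ((pi_norm_le_iff_of_nonneg (div_nonneg (by linarith) hD.le)).mpr
    fun k => ?_) ?_
  · rw [Real.norm_eq_abs, abs_div, abs_of_pos hD]
    gcongr
    exact abs_le.mpr ⟨by linarith [hA.eigenvalues_le_maxEig k],
      by linarith [hA.minEig_le_eigenvalues k]⟩
  · refine le_of_eq_of_le ?_ (norm_le_pi_norm _ j)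
    rw [hj, Real.norm_eq_abs, abs_of_nonneg (div_nonneg (by linarith) hD.le)]
    ring

end Matrix.IsHermitian

theorem regularized_contraction_factor_general {N : ℕ} {d : Fin N → ℕ}
    (Q : Matrix ((i : Fin N) × Fin (d i)) ((i : Fin N) × Fin (d i)) ℝ)
    (hblk : ∀ i, (blk Q i i).PosDef)
    (α : Fin N → ℝ) (hα : ∀ i, 0 ≤ α i)
    (γ : Fin N → ℝ)
    (hγ : ∀ i, γ i = 2 / (maxEig (blk Q i i) + minEig (blk Q i i) + 2 * α i))
    (i : Fin N)
    (hpos : 0 < 2 * (∑ j ∈ Finset.univ.erase i, specNorm (blk Q i j))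
        + maxEig (blk Q i i) - minEig (blk Q i i)) :
    specNorm ((1 : Matrix (Fin (d i)) (Fin (d i)) ℝ)
          - γ i • (blk Q i i + α i • (1 : Matrix (Fin (d i)) (Fin (d i)) ℝ)))
        + γ i * ∑ j ∈ Finset.univ.erase i, specNorm (blk Q i j)
      = (2 * (∑ j ∈ Finset.univ.erase i, specNorm (blk Q i j))
            + maxEig (blk Q i i) - minEig (blk Q i i))
          / (maxEig (blk Q i i) + minEig (blk Q i i) + 2 * α i)
    ∧ (0 < α i →
        (2 * (∑ j ∈ Finset.univ.erase i, specNorm (blk Q i j))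
            + maxEig (blk Q i i) - minEig (blk Q i i))
          / (maxEig (blk Q i i) + minEig (blk Q i i) + 2 * α i)
        < (2 * (∑ j ∈ Finset.univ.erase i, specNorm (blk Q i j))
            + maxEig (blk Q i i) - minEig (blk Q i i))
          / (maxEig (blk Q i i) + minEig (blk Q i i))) := by
  rw [hγ i, specNorm_eq_l2_opNorm]
  set A := blk Q i i
  have hA : A.IsHermitian := (hblk i).isHermitian
  have : Nonempty (Fin (d i)) := by
    -- an empty block makes every term of `hpos` vanish, as `sInf ∅ = sSup ∅ = 0`
    by_contra hempty
    rw [not_nonempty_iff] at hempty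
    simp [specNorm, minEig, maxEig, Subsingleton.elim _ (0 : Matrix _ _ ℝ)] at hpos
  obtain ⟨j, hj⟩ := hA.exists_eigenvalues_eq_minEig
  have hmin : 0 < minEig A := hj ▸ (hblk i).eigenvalues_pos j
  have hle : minEig A ≤ maxEig A := hj ▸ hA.eigenvalues_le_maxEig j
  have hD : 0 < maxEig A + minEig A + 2 * α i := by linarith [hα i]
  refine ⟨?_, fun hαi => div_lt_div_of_pos_left hpos (by linarith) (by linarith)⟩
  rw [hA.l2_opNorm_one_sub_smul_add_smul_one _ hD]
  field_simp
  ring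

theorem regularized_contraction_factor {N : ℕ} {d : Fin N → ℕ}
    (Q : Matrix ((i : Fin N) × Fin (d i)) ((i : Fin N) × Fin (d i)) ℝ)
    (hQ : Q.IsSymm) (hblk : ∀ i, (blk Q i i).PosDef)
    (α : Fin N → ℝ) (hα : ∀ i, 0 ≤ α i)
    (γ : Fin N → ℝ)
    (hγ : ∀ i, γ i = 2 / (maxEig (blk Q i i) + minEig (blk Q i i) + 2 * α i))
    (i : Fin N)
    (hpos : 0 < 2 * (∑ j ∈ Finset.univ.erase i, specNorm (blk Q i j))
        + maxEig (blk Q i i) - minEig (blk Q i i)) :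
    specNorm ((1 : Matrix (Fin (d i)) (Fin (d i)) ℝ)
          - γ i • (blk Q i i + α i • (1 : Matrix (Fin (d i)) (Fin (d i)) ℝ)))
        + γ i * ∑ j ∈ Finset.univ.erase i, specNorm (blk Q i j)
      = (2 * (∑ j ∈ Finset.univ.erase i, specNorm (blk Q i j))
            + maxEig (blk Q i i) - minEig (blk Q i i))
          / (maxEig (blk Q i i) + minEig (blk Q i i) + 2 * α i)
    ∧ (0 < α i →
        (2 * (∑ j ∈ Finset.univ.erase i, specNorm (blk Q i j))
            + maxEig (blk Q i i) - minEig (blk Q i i))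
          / (maxEig (blk Q i i) + minEig (blk Q i i) + 2 * α i)
        < (2 * (∑ j ∈ Finset.univ.erase i, specNorm (blk Q i j))
            + maxEig (blk Q i i) - minEig (blk Q i i))
          / (maxEig (blk Q i i) + minEig (blk Q i i))) :=
  regularized_contraction_factor_general Q hblk α hα γ hγ i hpos
end

section
/- Let Q = Qᵀ ≻ 0 block partitioned with strictly block diagonally dominant structure and define q_i = (2Σ_{j≠i}‖Q[i][j]‖_2 + λ_max(Q[i][i]) - λ_min(Q[i][i]))/(λ_max(Q[i][i]) + λ_min(Q[i][i])). Given q* ∈ (0,1), if each agent chooses α_i = max{ (q_i/q* - 1)·(λ_max(Q[i][i]) + λ_min(Q[i][i]))/2, 0 } and γ_i = 2/(λ_max(Q[i][i]) + λ_min(Q[i][i]) + 2α_i), then q_A := max_i [ (2Σ_{j≠i}‖Q[i][j]‖_2 + λ_max(Q[i][i]) - λ_min(Q[i][i]))/(λ_max(Q[i][i]) + λ_min(Q[i][i]) + 2α_i) ] ≤ q*. -/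
open Matrix BigOperators Finset

-- `sInf` is `0` on empty or unbounded-below sets, so a positive `sInf` bounds a nonempty set.
lemma Real.sSup_nonneg_of_sInf_pos {s : Set ℝ} (hs : 0 < sInf s) : 0 ≤ sSup s := by
  have hbdd : BddBelow s := by
    by_contra h
    rw [Real.sInf_of_not_bddBelow h] at hs
    exact hs.false
  exact Real.sSup_nonneg fun x hx => (hs.trans_le (csInf_le hbdd hx)).le

lemma maxEig_nonneg_of_minEig_pos {n : Type*} [Fintype n] [DecidableEq n] {A : Matrix n n ℝ}
    (hA : 0 < minEig A) : 0 ≤ maxEig A :=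
  Real.sSup_nonneg_of_sInf_pos hA

lemma div_le_of_regularized_denominator {a b q : ℝ} (hb : 0 < b) (hq : 0 < q) :
    a / (b + 2 * max ((a / b / q - 1) * (b / 2)) 0) ≤ q := by
  rcases le_or_gt q (a / b) with hle | hlt
  · have hratio : 1 ≤ a / b / q := (one_le_div hq).mpr hle
    have ha : 0 < a := (div_pos_iff_of_pos_right hb).mp (hq.trans_le hle)
    have hden : b + 2 * ((a / b / q - 1) * (b / 2)) = a / q := by
      field_simp
      ring
    rw [max_eq_left (mul_nonneg (sub_nonneg.mpr hratio) (by positivity)), hden, div_div_cancel₀ ha.ne']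
  · have hratio : a / b / q < 1 := (div_lt_one hq).mpr hlt
    rw [max_eq_right (mul_nonpos_of_nonpos_of_nonneg (sub_nonpos.mpr hratio.le) (by positivity)),
      mul_zero, add_zero]
    exact hlt.le

theorem convergence_rate_regularization_general {N : ℕ} {d : Fin N → ℕ}
    (Q : Matrix ((i : Fin N) × Fin (d i)) ((i : Fin N) × Fin (d i)) ℝ)
    (hdd : ∀ i, ∑ j ∈ Finset.univ.erase i, specNorm (blk Q i j) < minEig (blk Q i i))
    (qstar : ℝ) (hqs : qstar ∈ Set.Ioo (0 : ℝ) 1)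
    (qi α : Fin N → ℝ)
    (hqi : ∀ i, qi i = (2 * (∑ j ∈ Finset.univ.erase i, specNorm (blk Q i j))
          + maxEig (blk Q i i) - minEig (blk Q i i))
        / (maxEig (blk Q i i) + minEig (blk Q i i)))
    (hα : ∀ i, α i = max ((qi i / qstar - 1)
        * ((maxEig (blk Q i i) + minEig (blk Q i i)) / 2)) 0) :
    ∀ i, (2 * (∑ j ∈ Finset.univ.erase i, specNorm (blk Q i j))
          + maxEig (blk Q i i) - minEig (blk Q i i))
        / (maxEig (blk Q i i) + minEig (blk Q i i) + 2 * α i) ≤ qstar := by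
  intro i
  have hmin : 0 < minEig (blk Q i i) :=
    (Finset.sum_nonneg fun j _ => specNorm_nonneg (blk Q i j)).trans_lt (hdd i)
  have hmax : 0 ≤ maxEig (blk Q i i) := maxEig_nonneg_of_minEig_pos hmin
  rw [hα i, hqi i]
  exact div_le_of_regularized_denominator (by linarith) hqs.1

theorem convergence_rate_regularization {N : ℕ} {d : Fin N → ℕ}
    (Q : Matrix ((i : Fin N) × Fin (d i)) ((i : Fin N) × Fin (d i)) ℝ)
    (hQ : Q.IsSymm) (hblk : ∀ i, (blk Q i i).PosDef)
    (hdd : ∀ i, ∑ j ∈ Finset.univ.erase i, specNorm (blk Q i j) < minEig (blk Q i i))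
    (qstar : ℝ) (hqs : qstar ∈ Set.Ioo (0 : ℝ) 1)
    (qi α γ : Fin N → ℝ)
    (hqi : ∀ i, qi i = (2 * (∑ j ∈ Finset.univ.erase i, specNorm (blk Q i j))
          + maxEig (blk Q i i) - minEig (blk Q i i))
        / (maxEig (blk Q i i) + minEig (blk Q i i)))
    (hα : ∀ i, α i = max ((qi i / qstar - 1)
        * ((maxEig (blk Q i i) + minEig (blk Q i i)) / 2)) 0)
    (hγ : ∀ i, γ i = 2 / (maxEig (blk Q i i) + minEig (blk Q i i) + 2 * α i)) :
    ∀ i, (2 * (∑ j ∈ Finset.univ.erase i, specNorm (blk Q i j))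
          + maxEig (blk Q i i) - minEig (blk Q i i))
        / (maxEig (blk Q i i) + minEig (blk Q i i) + 2 * α i) ≤ qstar :=
  convergence_rate_regularization_general Q hdd qstar hqs qi α hqi hα
end
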